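/- Optimal value of the CPFair optimization: with the CPFair setup and adjusted scores Ŝ u i = S u i − λ₁·wC(u)·mc u i − λ₂·wP(item u i)·mp u i, the maximum of the fairness-aware objective F over all selections equals Σ_{u ∈ U} (Σ_{i ∈ T u} Ŝ u i) for any choice of top-K sets T u for Ŝ u; equivalently, it equals Σ_{u ∈ U} max { Σ_{i ∈ T} Ŝ u i : T ⊆ Fin N, |T| = K }. -/
import Mathlib


/-! CPFair setup: users `U` partitioned into active `U₁` / inactive `U₂`,
items `I` partitioned into short-head `I₁` / long-tail `I₂`, baseline scores
`S`, consumer metric `mc`, producer metric `mp`, and `item u i` the item at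
position `i` of user `u`'s candidate list. -/

/-- Consumer weight: `1/|U₁|` for active users, `-1/|U₂|` for the rest. -/
noncomputable def wC {U : Type*} [DecidableEq U] (U₁ U₂ : Finset U) (u : U) : ℝ :=
  if u ∈ U₁ then 1 / (U₁.card : ℝ) else -(1 / (U₂.card : ℝ))

/-- Producer weight: `1/|I₁|` for short-head items, `-1/|I₂|` for the rest. -/
noncomputable def wP {I : Type*} [DecidableEq I] (I₁ I₂ : Finset I) (j : I) : ℝ :=
  if j ∈ I₁ then 1 / (I₁.card : ℝ) else -(1 / (I₂.card : ℝ))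

/-- Deviation from Consumer Fairness of a selection `A`. -/
noncomputable def DCF {U : Type*} {N : ℕ} (U₁ U₂ : Finset U)
    (mc : U → Fin N → ℝ) (A : U → Finset (Fin N)) : ℝ :=
  (∑ u ∈ U₁, ∑ i ∈ A u, mc u i) / (U₁.card : ℝ)
    - (∑ u ∈ U₂, ∑ i ∈ A u, mc u i) / (U₂.card : ℝ)

/-- Deviation from Producer Fairness of a selection `A`. -/
noncomputable def DPF {U I : Type*} [Fintype U] [DecidableEq I] {N : ℕ}
    (I₁ I₂ : Finset I) (item : U → Fin N → I) (mp : U → Fin N → ℝ)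
    (A : U → Finset (Fin N)) : ℝ :=
  (∑ u : U, ∑ i ∈ (A u).filter (fun i => item u i ∈ I₁), mp u i) / (I₁.card : ℝ)
    - (∑ u : U, ∑ i ∈ (A u).filter (fun i => item u i ∈ I₂), mp u i) / (I₂.card : ℝ)

/-- The fairness-aware objective `F(A) = ∑ S - λ₁·DCF(A) - λ₂·DPF(A)`. -/
noncomputable def Fobj {U I : Type*} [Fintype U] [DecidableEq I] {N : ℕ}
    (U₁ U₂ : Finset U) (I₁ I₂ : Finset I) (S mc mp : U → Fin N → ℝ)
    (item : U → Fin N → I) (lam₁ lam₂ : ℝ) (A : U → Finset (Fin N)) : ℝ :=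
  (∑ u : U, ∑ i ∈ A u, S u i) - lam₁ * DCF U₁ U₂ mc A - lam₂ * DPF I₁ I₂ item mp A

/-- The adjusted per-user-per-position score used by the greedy algorithm. -/
noncomputable def Shat {U I : Type*} [DecidableEq U] [DecidableEq I] {N : ℕ}
    (U₁ U₂ : Finset U) (I₁ I₂ : Finset I) (S mc mp : U → Fin N → ℝ)
    (item : U → Fin N → I) (lam₁ lam₂ : ℝ) (u : U) (i : Fin N) : ℝ :=
  S u i - lam₁ * wC U₁ U₂ u * mc u i - lam₂ * wP I₁ I₂ (item u i) * mp u i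

lemma topK_sum_le {N : ℕ} (f : Fin N → ℝ) (T B : Finset (Fin N))
    (hcard : B.card = T.card)
    (htop : ∀ i ∈ T, ∀ j ∉ T, f j ≤ f i) :
    ∑ i ∈ B, f i ≤ ∑ i ∈ T, f i := by
  have hc : (B \ T).card = (T \ B).card := Finset.card_sdiff_comm hcard
  have key : ∑ i ∈ B \ T, f i ≤ ∑ i ∈ T \ B, f i := by
    have e := Finset.equivOfCardEq hc
    calc ∑ i ∈ B \ T, f i = ∑ x : (B \ T : Finset _), f x :=
          (Finset.sum_coe_sort _ _).symm
      _ ≤ ∑ x : (B \ T : Finset _), f (e x) := by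
          apply Finset.sum_le_sum
          intro x _
          have hx := x.2
          have hy := (e x).2
          simp only [Finset.mem_sdiff] at hx hy
          exact htop _ hy.1 _ hx.2
      _ = ∑ y : (T \ B : Finset _), f y := Equiv.sum_comp e (fun y => f (y : Fin N))
      _ = ∑ i ∈ T \ B, f i := Finset.sum_coe_sort _ _
  have h1 := Finset.sum_inter_add_sum_sdiff B T f
  have h2 := Finset.sum_inter_add_sum_sdiff T B f
  rw [Finset.inter_comm] at h1
  linarith

lemma Fobj_eq_sum_Shat {U I : Type*} [Fintype U] [DecidableEq U] [Fintype I]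
    [DecidableEq I] {N : ℕ}
    (U₁ U₂ : Finset U) (hUdisj : Disjoint U₁ U₂) (hUcover : U₁ ∪ U₂ = Finset.univ)
    (I₁ I₂ : Finset I) (hIdisj : Disjoint I₁ I₂) (hIcover : I₁ ∪ I₂ = Finset.univ)
    (S mc mp : U → Fin N → ℝ) (item : U → Fin N → I) (lam₁ lam₂ : ℝ)
    (A : U → Finset (Fin N)) :
    Fobj U₁ U₂ I₁ I₂ S mc mp item lam₁ lam₂ A
      = ∑ u : U, ∑ i ∈ A u, Shat U₁ U₂ I₁ I₂ S mc mp item lam₁ lam₂ u i := by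
  have hC : ∑ u : U, ∑ i ∈ A u, wC U₁ U₂ u * mc u i = DCF U₁ U₂ mc A := by
    rw [DCF, ← hUcover, sub_eq_add_neg, Finset.sum_union hUdisj]
    congr 1
    · rw [Finset.sum_div]
      refine Finset.sum_congr rfl fun u hu => ?_
      rw [Finset.sum_div]
      refine Finset.sum_congr rfl fun i _ => ?_
      rw [wC, if_pos hu]; ring
    · rw [Finset.sum_div, ← Finset.sum_neg_distrib]
      refine Finset.sum_congr rfl fun u hu => ?_
      have hnu : u ∉ U₁ := fun h => Finset.disjoint_left.mp hUdisj h hu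
      rw [Finset.sum_div, ← Finset.sum_neg_distrib]
      refine Finset.sum_congr rfl fun i _ => ?_
      rw [wC, if_neg hnu]; ring
  have hP : ∑ u : U, ∑ i ∈ A u, wP I₁ I₂ (item u i) * mp u i
      = DPF I₁ I₂ item mp A := by
    have hmem : ∀ j : I, j ∉ I₁ → j ∈ I₂ := fun j hj => by
      have : j ∈ I₁ ∪ I₂ := hIcover ▸ Finset.mem_univ j
      simpa [Finset.mem_union, hj] using this
    rw [DPF, Finset.sum_div, Finset.sum_div, ← Finset.sum_sub_distrib]
    refine Finset.sum_congr rfl fun u _ => ?_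
    rw [← Finset.sum_filter_add_sum_filter_not (A u) (fun i => item u i ∈ I₁)]
    have h1 : ∑ i ∈ (A u).filter (fun i => item u i ∈ I₁), wP I₁ I₂ (item u i) * mp u i
        = (∑ i ∈ (A u).filter (fun i => item u i ∈ I₁), mp u i) / (I₁.card : ℝ) := by
      rw [Finset.sum_div]
      refine Finset.sum_congr rfl fun i hi => ?_
      rw [wP, if_pos (Finset.mem_filter.mp hi).2]; ring
    have hfeq : (A u).filter (fun i => ¬ item u i ∈ I₁)
        = (A u).filter (fun i => item u i ∈ I₂) := by
      refine Finset.filter_congr fun i _ => ?_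
      constructor
      · exact fun h => hmem _ h
      · exact fun h h1 => (Finset.disjoint_left.mp hIdisj h1) h
    have h2 : ∑ i ∈ (A u).filter (fun i => ¬ item u i ∈ I₁), wP I₁ I₂ (item u i) * mp u i
        = -((∑ i ∈ (A u).filter (fun i => item u i ∈ I₂), mp u i) / (I₂.card : ℝ)) := by
      rw [hfeq, Finset.sum_div, ← Finset.sum_neg_distrib]
      refine Finset.sum_congr rfl fun i hi => ?_
      have hne : item u i ∉ I₁ := fun h =>
        Finset.disjoint_left.mp hIdisj h (Finset.mem_filter.mp hi).2
      rw [wP, if_neg hne]; ring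
    rw [h1, h2]; ring
  rw [Fobj, ← hC, ← hP, Finset.mul_sum, Finset.mul_sum,
    ← Finset.sum_sub_distrib, ← Finset.sum_sub_distrib]
  refine Finset.sum_congr rfl fun u _ => ?_
  rw [Finset.mul_sum, Finset.mul_sum, ← Finset.sum_sub_distrib, ← Finset.sum_sub_distrib]
  refine Finset.sum_congr rfl fun i _ => ?_
  rw [Shat]; ring

/-- Optimal value of the CPFair optimization: the maximum of the fairness-aware
objective `F` over all selections equals `∑_u ∑_{i ∈ T u} Ŝ u i` for any
choice of top-K sets `T u` for `Ŝ u`; equivalently, it equals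
`∑_u max {∑_{i ∈ T'} Ŝ u i : T' ⊆ Fin N, |T'| = K}`. -/
theorem cpfair_optimal_value (U : Type*) [Fintype U] [DecidableEq U] (I : Type*) [Fintype I] [DecidableEq I]
    (N K : ℕ) (hK : K ≤ N)
    (U₁ U₂ : Finset U) (hU₁ : U₁.Nonempty) (hU₂ : U₂.Nonempty)
    (hUdisj : Disjoint U₁ U₂) (hUcover : U₁ ∪ U₂ = Finset.univ)
    (I₁ I₂ : Finset I) (hI₁ : I₁.Nonempty) (hI₂ : I₂.Nonempty)
    (hIdisj : Disjoint I₁ I₂) (hIcover : I₁ ∪ I₂ = Finset.univ)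
    (S mc mp : U → Fin N → ℝ) (item : U → Fin N → I) (lam₁ lam₂ : ℝ)
    (T : U → Finset (Fin N)) (hTcard : ∀ u, (T u).card = K)
    (hTtop : ∀ u, ∀ i ∈ T u, ∀ j ∉ T u,
      Shat U₁ U₂ I₁ I₂ S mc mp item lam₁ lam₂ u j
        ≤ Shat U₁ U₂ I₁ I₂ S mc mp item lam₁ lam₂ u i) :
    IsGreatest
      {y : ℝ | ∃ A : U → Finset (Fin N), (∀ u, (A u).card = K) ∧
        y = Fobj U₁ U₂ I₁ I₂ S mc mp item lam₁ lam₂ A}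
      (∑ u : U, ∑ i ∈ T u, Shat U₁ U₂ I₁ I₂ S mc mp item lam₁ lam₂ u i) ∧
    (∑ u : U, ∑ i ∈ T u, Shat U₁ U₂ I₁ I₂ S mc mp item lam₁ lam₂ u i)
      = ∑ u : U,
          ((Finset.univ : Finset (Fin N)).powersetCard K).sup'
            (Finset.powersetCard_nonempty.mpr (by simpa using hK))
            (fun T' => ∑ i ∈ T', Shat U₁ U₂ I₁ I₂ S mc mp item lam₁ lam₂ u i) := by
  constructor
  · constructor
    · exact ⟨T, hTcard, (Fobj_eq_sum_Shat U₁ U₂ hUdisj hUcover I₁ I₂ hIdisj hIcover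
        S mc mp item lam₁ lam₂ T).symm⟩
    · rintro y ⟨A, hA, rfl⟩
      rw [Fobj_eq_sum_Shat U₁ U₂ hUdisj hUcover I₁ I₂ hIdisj hIcover
        S mc mp item lam₁ lam₂ A]
      refine Finset.sum_le_sum fun u _ => ?_
      exact topK_sum_le _ (T u) (A u) (by rw [hA u, hTcard u]) (hTtop u)
  · refine Finset.sum_congr rfl fun u _ => ?_
    apply le_antisymm
    · exact Finset.le_sup'
        (fun T' => ∑ i ∈ T', Shat U₁ U₂ I₁ I₂ S mc mp item lam₁ lam₂ u i)
        (by simp [Finset.mem_powersetCard, hTcard u])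
    · apply Finset.sup'_le
      intro T' hT'
      rw [Finset.mem_powersetCard] at hT'
      exact topK_sum_le _ (T u) T' (by rw [hT'.2, hTcard u]) (hTtop u)
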